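/- arXiv:2502.19275 — 2 statements merged into one kernel-verified Lean document; each statement's English description precedes it below -/
import Mathlib

section
/- Let M be a real T×K matrix, let M_t denote its t-th row, and let C_3 be the T×T diagonal matrix with t-th diagonal entry (‖M_t‖² + 1)^{1/2}. Set Γ = C_3^{-1}(M Mᵀ + I_T) C_3^{-1} (a T×T matrix) and Δ = Mᵀ C_3^{-1} (a K×T matrix). Let Ω* be the (T+K)×(T+K) block matrix Ω* = [[Γ, Δᵀ], [Δ, I_K]], i.e. Ω*_{[11]} = Γ (T×T), Ω*_{[12]} = C_3^{-1} M (T×K), Ω*_{[21]} = Mᵀ C_3^{-1} (K×T), Ω*_{[22]} = I_K. Then Ω* is positive definite and every diagonal entry of Ω* equals 1; hence Ω* is a full-rank correlation matrix. -/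
open Matrix

lemma posDef_transpose_mul_self_aux {n : Type*} [Fintype n] [DecidableEq n]
    (A : Matrix n n ℝ) (hA : IsUnit A.det) : (Aᵀ * A).PosDef := by
  refine Matrix.PosDef.of_dotProduct_mulVec_pos (Matrix.posSemidef_conjTranspose_mul_self A).isHermitian fun x hx => ?_
  have hAx : A *ᵥ x ≠ 0 := by
    intro h
    apply hx
    have := congrArg (fun v => A⁻¹ *ᵥ v) h
    simpa [Matrix.mulVec_mulVec, Matrix.nonsing_inv_mul A hA] using this
  have heq : star x ⬝ᵥ ((Aᵀ * A) *ᵥ x) = (A *ᵥ x) ⬝ᵥ (A *ᵥ x) := by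
    rw [← Matrix.mulVec_mulVec, Matrix.dotProduct_mulVec]
    simp [Matrix.vecMul_transpose]
  rw [heq]
  obtain ⟨i, hi⟩ := Function.ne_iff.mp hAx
  exact Finset.sum_pos' (fun j _ => mul_self_nonneg _)
    ⟨i, Finset.mem_univ i, mul_self_pos.mpr (by simpa using hi)⟩

/-- Let `M` be a real `T×K` matrix with rows `Mₜ`, let `C₃` be the `T×T`
diagonal matrix with entries `(‖Mₜ‖² + 1)^{1/2}`, and set `Γ = C₃⁻¹(M Mᵀ + I_T)C₃⁻¹`.
Then the block matrix `Ω* = [[Γ, C₃⁻¹ M], [Mᵀ C₃⁻¹, I_K]]` is positive definite and all its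
diagonal entries equal `1`; i.e. `Ω*` is a full-rank correlation matrix. -/
theorem sun_correlation_matrix (T K : ℕ) (M : Matrix (Fin T) (Fin K) ℝ)
    (C₃ : Matrix (Fin T) (Fin T) ℝ)
    (hC₃ : C₃ = Matrix.diagonal fun t => Real.sqrt ((∑ k, (M t k) ^ 2) + 1))
    (Γ : Matrix (Fin T) (Fin T) ℝ)
    (hΓ : Γ = C₃⁻¹ * (M * M.transpose + 1) * C₃⁻¹)
    (Ωstar : Matrix (Fin T ⊕ Fin K) (Fin T ⊕ Fin K) ℝ)
    (hΩ : Ωstar = Matrix.fromBlocks Γ (C₃⁻¹ * M) (M.transpose * C₃⁻¹) 1) :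
    Ωstar.PosDef ∧ ∀ i, Ωstar i i = 1 := by
  set d : Fin T → ℝ := fun t => Real.sqrt ((∑ k, (M t k) ^ 2) + 1) with hd
  have hpos : ∀ t, 0 < (∑ k, (M t k) ^ 2) + 1 := fun t => by positivity
  have hdpos : ∀ t, 0 < d t := fun t => Real.sqrt_pos.mpr (hpos t)
  have hdetC : IsUnit C₃.det := by
    rw [hC₃, Matrix.det_diagonal]
    exact isUnit_iff_ne_zero.mpr (Finset.prod_ne_zero_iff.mpr fun t _ => (hdpos t).ne')
  have hCinv : C₃⁻¹ = Matrix.diagonal fun t => (d t)⁻¹ := by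
    refine Matrix.inv_eq_right_inv ?_
    rw [hC₃, Matrix.diagonal_mul_diagonal]
    have : (fun t => d t * (d t)⁻¹) = fun _ : Fin T => (1 : ℝ) := by
      funext t; exact mul_inv_cancel₀ (hdpos t).ne'
    rw [this, Matrix.diagonal_one]
  have hCinvT : (C₃⁻¹)ᵀ = C₃⁻¹ := by rw [hCinv, Matrix.diagonal_transpose]
  set A : Matrix (Fin T ⊕ Fin K) (Fin T ⊕ Fin K) ℝ :=
    Matrix.fromBlocks C₃⁻¹ 0 (M.transpose * C₃⁻¹) 1 with hA
  have hΩA : Ωstar = Aᵀ * A := by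
    rw [hΩ, hA, hΓ, Matrix.fromBlocks_transpose, Matrix.fromBlocks_multiply]
    simp only [Matrix.transpose_mul, Matrix.transpose_transpose, hCinvT,
      Matrix.transpose_zero, Matrix.transpose_one, Matrix.mul_zero, Matrix.zero_mul,
      Matrix.mul_one, Matrix.one_mul, add_zero, zero_add,
      Matrix.mul_add, Matrix.add_mul, Matrix.mul_assoc]
    rw [add_comm (C₃⁻¹ * (M * (Mᵀ * C₃⁻¹)))]
  have hdetA : IsUnit A.det := by
    rw [hA, Matrix.det_fromBlocks_zero₁₂, Matrix.det_one, mul_one, Matrix.det_nonsing_inv]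
    exact isUnit_iff_ne_zero.mpr
      (by simp [Ring.inverse_eq_inv', isUnit_iff_ne_zero.mp hdetC])
  refine ⟨hΩA ▸ posDef_transpose_mul_self_aux A hdetA, fun i => ?_⟩
  rcases i with t | k
  · rw [hΩ]
    simp only [Matrix.fromBlocks_apply₁₁]
    rw [hΓ, hCinv, Matrix.mul_diagonal, Matrix.diagonal_mul]
    have hMM : (M * M.transpose + (1 : Matrix (Fin T) (Fin T) ℝ)) t t
        = (∑ k, (M t k) ^ 2) + 1 := by
      simp [Matrix.mul_apply, Matrix.add_apply, Matrix.one_apply, sq]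
    rw [hMM]
    have hsq : d t * d t = (∑ k, (M t k) ^ 2) + 1 := Real.mul_self_sqrt (hpos t).le
    field_simp
    rw [div_eq_one_iff_eq (pow_pos (hdpos t) 2).ne', sq]
    linarith [hsq]
  · rw [hΩ]
    simp [Matrix.fromBlocks_apply₂₂, Matrix.one_apply]
end

section
/- Let f : ℝ^K → [0, ∞) be a probability density with respect to Lebesgue measure, let p : ℝ^K → (0, 1) be measurable, and set c = ∫ p f dλ, so 0 < c < 1. Let μ be the joint probability measure on ℝ^K × {0,1} of the pair (θ, Y) where θ has density f and, conditionally on θ, Y is Bernoulli with success probability p(θ); let ν be the product of the two marginals of μ, i.e., ν = (f dλ) ⊗ Bernoulli(c). Assume the integral I = ∫_{ℝ^K} f(θ) [ p(θ) log(p(θ)/c) + (1 − p(θ)) log((1 − p(θ))/(1 − c)) ] dθ is finite. Then μ is absolutely continuous with respect to ν and the Kullback–Leibler divergence KL(μ ‖ ν) equals I. -/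
/-!
With `m = f dλ`, the reference measure splits as `ν = c • (m ⊗ δ₁) + (1 - c) • (m ⊗ δ₀)`, so
`μ = ν.withDensity g` with `g (θ, 1) = p θ / c` and `g (θ, 0) = (1 - p θ) / (1 - c)`; hence
`dμ/dν = g` `ν`-a.e. Integrating `log g` against `μ` splits along `Y` into the two terms of `I`. Each term is
integrable on its own: since `x log (x / y) ≥ x - y ≥ -1` for `x > 0`, `0 < y ≤ 1`, both are bounded
below by `-f`, and their sum is integrable.
-/

open MeasureTheory

/-- The Bernoulli measure on `{0,1}` (encoded as `Bool`) with success probability `c`: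
mass `c` at `true` (i.e. `1`) and `1 − c` at `false` (i.e. `0`). -/
noncomputable def bernoulliMeasure (c : ℝ) : Measure Bool :=
  ENNReal.ofReal c • Measure.dirac true + ENNReal.ofReal (1 - c) • Measure.dirac false

open scoped ENNReal

lemma Real.sub_le_mul_log_div {x y : ℝ} (hx : 0 < x) (hy : 0 < y) :
    x - y ≤ x * Real.log (x / y) := by
  have h := Real.one_sub_inv_le_log_of_pos (div_pos hx hy)
  rw [inv_div] at h
  have := mul_le_mul_of_nonneg_left h hx.le
  rwa [mul_sub, mul_one, mul_div_cancel₀ _ hx.ne'] at this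

instance (c : ℝ) : IsFiniteMeasure (bernoulliMeasure c) := by
  constructor
  simp [bernoulliMeasure]

/-- The density of `Bernoulli q` with respect to `Bernoulli c`. -/
noncomputable def bernoulliRatio (c q : ℝ) : Bool → ℝ
  | true => q / c
  | false => (1 - q) / (1 - c)

lemma bernoulliRatio_nonneg {c q : ℝ} (hc0 : 0 ≤ c) (hc1 : c ≤ 1) (hq0 : 0 ≤ q) (hq1 : q ≤ 1)
    (b : Bool) : 0 ≤ bernoulliRatio c q b := by
  cases b
  · exact div_nonneg (sub_nonneg.2 hq1) (sub_nonneg.2 hc1)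
  · exact div_nonneg hq0 hc0

namespace MeasureTheory

variable {α : Type*} [MeasurableSpace α]

lemma withDensity_ofReal_mul (μ : Measure α) {f g : α → ℝ} (hf : Measurable f)
    (hg : Measurable g) (hf_nonneg : ∀ x, 0 ≤ f x) :
    μ.withDensity (fun x => ENNReal.ofReal (f x * g x)) =
      (μ.withDensity fun x => ENNReal.ofReal (f x)).withDensity fun x => ENNReal.ofReal (g x) := by
  rw [← withDensity_mul _ hf.ennreal_ofReal hg.ennreal_ofReal]
  simp only [ENNReal.ofReal_mul (hf_nonneg _)]
  rfl

lemma ofReal_smul_withDensity_ofReal_div (μ : Measure α) (g : α → ℝ) {a : ℝ} (ha : 0 < a) :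
    ENNReal.ofReal a • μ.withDensity (fun x => ENNReal.ofReal (g x / a)) =
      μ.withDensity fun x => ENNReal.ofReal (g x) := by
  rw [← withDensity_smul' _ _ ENNReal.ofReal_ne_top]
  congr 1
  funext x
  rw [Pi.smul_apply, smul_eq_mul, ← ENNReal.ofReal_mul ha.le, mul_div_cancel₀ _ ha.ne']

lemma Measure.withDensity_map {β : Type*} [MeasurableSpace β] {h : α → β} (hh : Measurable h)
    (μ : Measure α) {g : β → ℝ≥0∞} (hg : Measurable g) :
    (μ.map h).withDensity g = (μ.withDensity (g ∘ h)).map h := by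
  ext s hs
  rw [withDensity_apply _ hs, setLIntegral_map hs hg hh, Measure.map_apply hh hs,
    withDensity_apply _ (hh hs)]
  rfl

lemma integral_withDensity_ofReal (μ : Measure α) {w : α → ℝ} (hw : Measurable w)
    (hw_nonneg : ∀ x, 0 ≤ w x) (h : α → ℝ) :
    ∫ x, h x ∂μ.withDensity (fun x => ENNReal.ofReal (w x)) = ∫ x, w x * h x ∂μ := by
  rw [integral_withDensity_eq_integral_toReal_smul hw.ennreal_ofReal
    (ae_of_all _ fun _ => ENNReal.ofReal_lt_top)]
  simp only [ENNReal.toReal_ofReal (hw_nonneg _), smul_eq_mul]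

lemma integrable_withDensity_ofReal_iff (μ : Measure α) {w : α → ℝ} (hw : Measurable w)
    (hw_nonneg : ∀ x, 0 ≤ w x) {h : α → ℝ} :
    Integrable h (μ.withDensity fun x => ENNReal.ofReal (w x)) ↔
      Integrable (fun x => w x * h x) μ := by
  rw [integrable_withDensity_iff_integrable_smul' hw.ennreal_ofReal
    (ae_of_all _ fun _ => ENNReal.ofReal_lt_top)]
  simp only [ENNReal.toReal_ofReal (hw_nonneg _), smul_eq_mul]

lemma Integrable.of_add_of_forall_le {μ : Measure α} {u v l : α → ℝ}
    (hu : AEStronglyMeasurable u μ) (huv : Integrable (fun x => u x + v x) μ)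
    (hl : Integrable l μ) (hlu : ∀ x, l x ≤ u x) (hlv : ∀ x, l x ≤ v x) :
    Integrable u μ := by
  have hul : Integrable (fun x => u x - l x) μ := by
    refine (huv.sub (hl.add hl)).mono' (hu.sub hl.aestronglyMeasurable) (ae_of_all _ fun x => ?_)
    rw [Real.norm_eq_abs, abs_of_nonneg (sub_nonneg.2 (hlu x))]
    simp only [Pi.sub_apply, Pi.add_apply]
    linarith [hlv x]
  exact (hul.add hl).congr (.of_forall fun x => sub_add_cancel (u x) (l x))

lemma integral_map_prodMk_true_add_false {E : Type*} [NormedAddCommGroup E] [NormedSpace ℝ E]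
    {μ₁ μ₀ : Measure α} {φ : α × Bool → E}
    (h₁ : Integrable (fun a => φ (a, true)) μ₁) (h₀ : Integrable (fun a => φ (a, false)) μ₀) :
    ∫ x, φ x ∂(μ₁.map (fun a => (a, true)) + μ₀.map (fun a => (a, false))) =
      ∫ a, φ (a, true) ∂μ₁ + ∫ a, φ (a, false) ∂μ₀ := by
  have he (b : Bool) : MeasurableEmbedding (fun a : α => (a, b)) :=
    measurableEmbedding_prod_mk_right b
  rw [integral_add_measure ((he true).integrable_map_iff.2 h₁)
    ((he false).integrable_map_iff.2 h₀), (he true).integral_map, (he false).integral_map]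

lemma integral_map_prodMk_withDensity_ofReal {μ : Measure α} {w₁ w₀ : α → ℝ}
    (hw₁ : Measurable w₁) (hw₀ : Measurable w₀) (hw₁_nonneg : ∀ a, 0 ≤ w₁ a)
    (hw₀_nonneg : ∀ a, 0 ≤ w₀ a) {φ : α × Bool → ℝ}
    (h₁ : Integrable (fun a => w₁ a * φ (a, true)) μ)
    (h₀ : Integrable (fun a => w₀ a * φ (a, false)) μ) :
    ∫ x, φ x ∂((μ.withDensity fun a => ENNReal.ofReal (w₁ a)).map (fun a => (a, true)) +
        (μ.withDensity fun a => ENNReal.ofReal (w₀ a)).map (fun a => (a, false))) =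
      ∫ a, w₁ a * φ (a, true) ∂μ + ∫ a, w₀ a * φ (a, false) ∂μ := by
  rw [integral_map_prodMk_true_add_false
      ((integrable_withDensity_ofReal_iff _ hw₁ hw₁_nonneg).2 h₁)
      ((integrable_withDensity_ofReal_iff _ hw₀ hw₀_nonneg).2 h₀),
    integral_withDensity_ofReal _ hw₁ hw₁_nonneg, integral_withDensity_ofReal _ hw₀ hw₀_nonneg]

lemma Measure.prod_bernoulliMeasure (μ : Measure α) [SFinite μ] (c : ℝ) :
    μ.prod (bernoulliMeasure c) =
      ENNReal.ofReal c • μ.map (fun a => (a, true)) +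
        ENNReal.ofReal (1 - c) • μ.map (fun a => (a, false)) := by
  rw [bernoulliMeasure, Measure.prod_add, Measure.prod_smul_right, Measure.prod_smul_right,
    Measure.prod_dirac, Measure.prod_dirac]

lemma _root_.Measurable.bernoulliRatio_comp_fst {q : α → ℝ} (hq : Measurable q) (c : ℝ) :
    Measurable fun x : α × Bool => bernoulliRatio c (q x.1) x.2 :=
  measurable_from_prod_countable_left fun b => by
    cases b <;> simp only [bernoulliRatio] <;> fun_prop

lemma Measure.prod_bernoulliMeasure_withDensity_bernoulliRatio (μ : Measure α) [SFinite μ]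
    {q : α → ℝ} (hq : Measurable q) {c : ℝ} (hc0 : 0 < c) (hc1 : c < 1) :
    (μ.prod (bernoulliMeasure c)).withDensity
        (fun x => ENNReal.ofReal (bernoulliRatio c (q x.1) x.2)) =
      (μ.withDensity fun a => ENNReal.ofReal (q a)).map (fun a => (a, true)) +
        (μ.withDensity fun a => ENNReal.ofReal (1 - q a)).map (fun a => (a, false)) := by
  have hg := (hq.bernoulliRatio_comp_fst c).ennreal_ofReal
  rw [Measure.prod_bernoulliMeasure, withDensity_add_measure, withDensity_smul_measure,
    withDensity_smul_measure, Measure.withDensity_map measurable_prodMk_right _ hg,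
    Measure.withDensity_map measurable_prodMk_right _ hg, ← Measure.map_smul, ← Measure.map_smul]
  congr 2
  · exact ofReal_smul_withDensity_ofReal_div μ q hc0
  · exact ofReal_smul_withDensity_ofReal_div μ (fun a => 1 - q a) (sub_pos.2 hc1)

lemma integrable_mul_log_terms_of_integrable_add {μ : Measure α} {f q : α → ℝ} {c : ℝ}
    (hf : Integrable f μ) (hf_meas : Measurable f) (hq_meas : Measurable q)
    (hf_nonneg : ∀ x, 0 ≤ f x) (hq : ∀ x, 0 < q x ∧ q x < 1) (hc0 : 0 < c) (hc1 : c < 1)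
    (hI : Integrable (fun x =>
      f x * (q x * Real.log (q x / c) + (1 - q x) * Real.log ((1 - q x) / (1 - c)))) μ) :
    Integrable (fun x => f x * (q x * Real.log (q x / c))) μ ∧
      Integrable (fun x => f x * ((1 - q x) * Real.log ((1 - q x) / (1 - c)))) μ := by
  have hlow (a) {x y : ℝ} (hx : 0 < x) (hy : 0 < y) (hy1 : y ≤ 1) :
      -f a ≤ f a * (x * Real.log (x / y)) := by
    nlinarith [Real.sub_le_mul_log_div hx hy, hf_nonneg a]
  have hsum := hI.congr (.of_forall fun x => mul_add (f x) _ _)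
  have h₁ : Integrable (fun x => f x * (q x * Real.log (q x / c))) μ :=
    .of_add_of_forall_le (by fun_prop) hsum hf.neg (fun x => hlow x (hq x).1 hc0 hc1.le)
      (fun x => hlow x (sub_pos.2 (hq x).2) (sub_pos.2 hc1) (by linarith))
  exact ⟨h₁, (hsum.sub h₁).congr (.of_forall fun x => add_sub_cancel_left _ _)⟩

end MeasureTheory

theorem mutual_information_bernoulli_general (K : ℕ) (f p : (Fin K → ℝ) → ℝ)
    (hf_meas : Measurable f) (hp_meas : Measurable p)
    (hf_nonneg : ∀ θ, 0 ≤ f θ) (hf_prob : ∫ θ, f θ = 1)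
    (hp : ∀ θ, 0 < p θ ∧ p θ < 1)
    (c : ℝ) (hc01 : 0 < c ∧ c < 1)
    (μ ν : Measure ((Fin K → ℝ) × Bool))
    (hμ : μ =
      Measure.map (fun θ => (θ, true))
          (volume.withDensity fun θ => ENNReal.ofReal (f θ * p θ)) +
        Measure.map (fun θ => (θ, false))
          (volume.withDensity fun θ => ENNReal.ofReal (f θ * (1 - p θ))))
    (hν : ν = (volume.withDensity fun θ => ENNReal.ofReal (f θ)).prod (bernoulliMeasure c))
    (hI : Integrable (fun θ =>
      f θ * (p θ * Real.log (p θ / c) + (1 - p θ) * Real.log ((1 - p θ) / (1 - c))))) :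
    μ ≪ ν ∧
    ∫ x, Real.log ((μ.rnDeriv ν x).toReal) ∂μ =
      ∫ θ, f θ * (p θ * Real.log (p θ / c) +
        (1 - p θ) * Real.log ((1 - p θ) / (1 - c))) := by
  obtain ⟨hc0, hc1⟩ := hc01
  set g := fun x : (Fin K → ℝ) × Bool => bernoulliRatio c (p x.1) x.2
  have hμν : μ = ν.withDensity fun x => ENNReal.ofReal (g x) := by
    rw [hμ, hν, Measure.prod_bernoulliMeasure_withDensity_bernoulliRatio _ hp_meas hc0 hc1,
      ← withDensity_ofReal_mul _ hf_meas hp_meas hf_nonneg,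
      ← withDensity_ofReal_mul _ hf_meas (by fun_prop) hf_nonneg]
  have : SigmaFinite ν := hν ▸ inferInstance
  have hac : μ ≪ ν := hμν ▸ withDensity_absolutelyContinuous _ _
  refine ⟨hac, ?_⟩
  have hrn : μ.rnDeriv ν =ᵐ[μ] fun x => ENNReal.ofReal (g x) := hac.ae_le <|
    hμν ▸ Measure.rnDeriv_withDensity ν (hp_meas.bernoulliRatio_comp_fst c).ennreal_ofReal
  obtain ⟨h₁, h₀⟩ := integrable_mul_log_terms_of_integrable_add
    (.of_integral_ne_zero (by simp [hf_prob])) hf_meas hp_meas hf_nonneg hp hc0 hc1 hI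
  calc ∫ x, Real.log ((μ.rnDeriv ν x).toReal) ∂μ = ∫ x, Real.log (g x) ∂μ :=
        integral_congr_ae <| hrn.mono fun x hx => by
          dsimp only at hx ⊢
          rw [hx, ENNReal.toReal_ofReal (bernoulliRatio_nonneg hc0.le hc1.le (hp x.1).1.le
            (hp x.1).2.le x.2)]
    _ = (∫ θ, f θ * (p θ * Real.log (p θ / c))) +
          ∫ θ, f θ * ((1 - p θ) * Real.log ((1 - p θ) / (1 - c))) := by
        rw [hμ, integral_map_prodMk_withDensity_ofReal (by fun_prop) (by fun_prop)
          (fun θ => mul_nonneg (hf_nonneg θ) (hp θ).1.le)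
          (fun θ => mul_nonneg (hf_nonneg θ) (sub_pos.2 (hp θ).2).le)
          (by simpa only [mul_assoc]) (by simpa only [mul_assoc])]
        simp only [g, bernoulliRatio, mul_assoc]
    _ = _ := by
        rw [← integral_add h₁ h₀]
        simp only [mul_add]

/-- **mutual information of a latent trait and a probit response.**
Let `f` be a probability density on `ℝ^K`, `p : ℝ^K → (0,1)` measurable, `c = ∫ p f dλ` with
`0 < c < 1`. Let `μ` be the joint law of `(θ, Y)` where `θ` has density `f` and
`Y | θ ~ Bernoulli(p(θ))`, and let `ν` be the product of the two marginals of `μ`,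
`ν = (f dλ) ⊗ Bernoulli(c)`. If
`I = ∫ f(θ) [p(θ) log(p(θ)/c) + (1 − p(θ)) log((1 − p(θ))/(1 − c))] dθ` is finite, then
`μ ≪ ν` and `KL(μ ‖ ν) = ∫ log(dμ/dν) dμ = I`. -/
theorem mutual_information_bernoulli (K : ℕ) (f p : (Fin K → ℝ) → ℝ)
    (hf_meas : Measurable f) (hp_meas : Measurable p)
    (hf_nonneg : ∀ θ, 0 ≤ f θ) (hf_prob : ∫ θ, f θ = 1)
    (hp : ∀ θ, 0 < p θ ∧ p θ < 1)
    (c : ℝ) (hc : c = ∫ θ, p θ * f θ) (hc01 : 0 < c ∧ c < 1)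
    (μ ν : Measure ((Fin K → ℝ) × Bool))
    (hμ : μ =
      Measure.map (fun θ => (θ, true))
          (volume.withDensity fun θ => ENNReal.ofReal (f θ * p θ)) +
        Measure.map (fun θ => (θ, false))
          (volume.withDensity fun θ => ENNReal.ofReal (f θ * (1 - p θ))))
    (hν : ν = (volume.withDensity fun θ => ENNReal.ofReal (f θ)).prod (bernoulliMeasure c))
    (hI : Integrable (fun θ =>
      f θ * (p θ * Real.log (p θ / c) + (1 - p θ) * Real.log ((1 - p θ) / (1 - c))))) :
    μ ≪ ν ∧
    ∫ x, Real.log ((μ.rnDeriv ν x).toReal) ∂μ =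
      ∫ θ, f θ * (p θ * Real.log (p θ / c) +
        (1 - p θ) * Real.log ((1 - p θ) / (1 - c))) :=
  mutual_information_bernoulli_general K f p hf_meas hp_meas hf_nonneg hf_prob hp c hc01 μ ν hμ hν
    hI
end
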